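/- Let k ≥ 3 and let G be a connected graph of treedepth k. Then every unmarked vertex, under Alice's ancestor-marking strategy in the marking game on G, has at most 2k-4 marked neighbors at every point in the game; consequently the (connected) game coloring number of G is at most 2k-3. -/

import Mathlib

/-- A rooted tree on vertex set `V`, given by a parent function together with a
depth function certifying acyclicity.  The root is the unique vertex of depth `0`. -/
structure RTree (V : Type*) where
  parent : V → V
  root : V
  depth : V → ℕ
  depth_root : depth root = 0
  depth_parent : ∀ v, v ≠ root → depth (parent v) + 1 = depth v
  parent_root : parent root = root

namespace RTree

variable {V : Type*} (T : RTree V)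

/-- `u` is a strict ancestor of `v` in `T`. -/
def IsStrictAncestor (u v : V) : Prop :=
  u ≠ v ∧ ∃ n : ℕ, T.parent^[n] v = u

/-- The closure of a rooted tree: `u ~ v` iff one is a strict ancestor of the other. -/
def closure : SimpleGraph V where
  Adj u v := T.IsStrictAncestor u v ∨ T.IsStrictAncestor v u
  symm := ⟨by intro u v h; tauto⟩
  loopless := ⟨by rintro v (⟨h, -⟩ | ⟨h, -⟩) <;> exact h rfl⟩

/-- `T` has height at most `k`: every root-to-leaf path has at most `k` vertices. -/
def HeightLE (k : ℕ) : Prop := ∀ v, T.depth v < k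

/-- `v` is a leaf of `T` (it has no children). -/
def IsLeaf (v : V) : Prop := ∀ u, T.parent u = v → u = v

end RTree

/-- A graph `G` has treedepth at most `k` if it embeds into the closure of a rooted
tree of height at most `k` (whose vertex set may be larger than that of `G`). -/
def TreedepthLE {W : Type} (G : SimpleGraph W) (k : ℕ) : Prop :=
  ∃ (V : Type) (T : RTree V) (f : W ↪ V),
    T.HeightLE k ∧ ∀ a b, G.Adj a b → T.closure.Adj (f a) (f b)

section Strategy

variable {V : Type} (G : SimpleGraph V) (T : RTree V)

/-- A vertex is available at a state `L` if it is unmarked and adjacent to a marked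
vertex. -/
def Available (L : List V) (u : V) : Prop := u ∉ L ∧ ∃ w ∈ L, G.Adj w u

/-- Alice's ancestor-marking strategy: in the state `L` in which Bob has just marked `b`,
Alice may answer with `a` iff either `a` is an unmarked available ancestor of `b` of least
level, or no unmarked available ancestor of `b` exists and `a` is an available vertex of
least level. -/
def AliceMoveOK (L : List V) (b a : V) : Prop :=
  (T.IsStrictAncestor a b ∧ Available G L a ∧
    ∀ u, T.IsStrictAncestor u b → Available G L u → T.depth a ≤ T.depth u) ∨
  ((∀ u, T.IsStrictAncestor u b → ¬ Available G L u) ∧ Available G L a ∧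
    ∀ u, Available G L u → T.depth a ≤ T.depth u)

/-- The chronological list `L` of marked vertices (earliest first) is a play of the
marking game in which no vertex is marked twice, Alice (who moves at even positions,
starting the game) first marks the root, and afterwards always follows the
ancestor-marking strategy.  Bob (who moves at odd positions) may mark any unmarked
vertex. -/
def FollowsStrategy (L : List V) : Prop :=
  L.Nodup ∧
  (∀ h : 0 < L.length, L.get ⟨0, h⟩ = T.root) ∧
  ∀ i : ℕ, 1 ≤ i → ∀ h : 2 * i < L.length,
    AliceMoveOK G T (L.take (2 * i)) (L.get ⟨2 * i - 1, by omega⟩) (L.get ⟨2 * i, h⟩)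

open Classical in
/-- The number of marked strict ancestors of `v` at the state `L`. -/
noncomputable def markedAncestors (L : List V) (v : V) : ℕ :=
  L.countP fun u => decide (T.IsStrictAncestor u v)

open Classical in
/-- The number of descendant-neighbours of `v` that were marked by Bob at the state `L`
(Bob's moves are the ones at odd chronological positions). -/
noncomputable def bobDescCount (L : List V) (v : V) : ℕ :=
  ((L.zipIdx.filter fun p => decide (p.2 % 2 = 1)).map Prod.fst).countP
    fun u => decide (G.Adj v u ∧ T.IsStrictAncestor v u)

end Strategy

section MarkingGame

variable {V : Type} [Fintype V] [DecidableEq V] (G : SimpleGraph V) [DecidableRel G.Adj]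

/-- A legal move in the connected marking game from the state `S` (most recent move
first): the vertex is unmarked, and (except for the very first move) is adjacent to a
marked vertex, so that the marked set stays connected. -/
def ConnLegalMove (S : List V) (v : V) : Prop :=
  v ∉ S ∧ (S = [] ∨ ∃ u ∈ S, G.Adj u v)

/-- The number of neighbours of `v` marked strictly before `v` in the chronological
marking order `L`. -/
def backDegree (L : List V) (v : V) : ℕ :=
  (L.takeWhile fun u => decide (u ≠ v)).countP fun u => decide (G.Adj v u)

/-- The score of a completed play with chronological marking order `L`: the maximum over
all vertices `v` of one plus the number of neighbours of `v` marked strictly before `v`. -/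
def markScore (L : List V) : ℕ :=
  Finset.univ.sup fun v => backDegree G L v + 1

/-- Alice can guarantee a final score of at most `m` in the connected marking game
starting from the state `S` (most recent move first; Alice moves when an even number of
vertices has been marked). -/
def AliceWinsFrom (m : ℕ) (S : List V) : Prop :=
  if _h : S.length < Fintype.card V then
    if Even S.length then ∃ v, ConnLegalMove G S v ∧ AliceWinsFrom m (v :: S)
    else ∀ v, ConnLegalMove G S v → AliceWinsFrom m (v :: S)
  else markScore G S.reverse ≤ m
termination_by Fintype.card V - S.length
decreasing_by all_goals simp; omega

/-- The connected game coloring number of `G`: the least `m` such that Alice can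
guarantee that, in the connected marking game on `G`, every vertex has at most `m - 1`
neighbours marked strictly before it. -/
noncomputable def connGameColNumber : ℕ := sInf {m | AliceWinsFrom G m []}

/-- A graph is `d`-degenerate if every nonempty (induced) subgraph has a vertex of degree
at most `d`. -/
def Degenerate (d : ℕ) : Prop :=
  ∀ s : Finset V, s.Nonempty → ∃ v ∈ s, (s.filter fun u => G.Adj v u).card ≤ d

/-- The coloring number of `G`: one more than the degeneracy of `G`. -/
noncomputable def colNumber : ℕ := sInf {d | Degenerate G d} + 1

end MarkingGame

/-!
A neighbour of an unmarked vertex `v` in the closure of `T` is a strict ancestor or a strict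
descendant of `v`. At most `depth v` ancestors exist. Whenever Bob marks a descendant of `v`
while `v` is available, Alice answers with an ancestor of `v` of level below `depth v`; and Alice
marks a descendant neighbour of `v` only while `v` has no marked neighbour at all, which happens
at most once and forces the root (always marked) to be a non-neighbour of `v`. Altogether `v` has
at most `2 · depth v ≤ 2k - 4` marked neighbours if it has a descendant, and at most
`depth v ≤ k - 1` otherwise. In the connected game Alice can always follow the strategy, because
a connected graph always has an available vertex, so every back-degree is at most `2k - 4`.
-/

namespace RTree

variable {V : Type*} (T : RTree V)

theorem depth_parent_eq (v : V) : T.depth (T.parent v) = T.depth v - 1 := by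
  by_cases hv : v = T.root
  · simp [hv, T.parent_root, T.depth_root]
  · have := T.depth_parent v hv
    omega

theorem depth_iterate_parent (n : ℕ) (v : V) :
    T.depth (T.parent^[n] v) = T.depth v - n := by
  induction n generalizing v with
  | zero => rfl
  | succ n ih => rw [Function.iterate_succ_apply', depth_parent_eq, ih]; omega

theorem iterate_parent_root (n : ℕ) : T.parent^[n] T.root = T.root :=
  Function.iterate_fixed T.parent_root n

theorem iterate_parent_depth (v : V) : T.parent^[T.depth v] v = T.root := by
  induction h : T.depth v generalizing v with
  | zero =>
    by_contra hv
    have := T.depth_parent v hv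
    omega
  | succ d ih =>
    have hv : v ≠ T.root := by rintro rfl; simp [T.depth_root] at h
    rw [Function.iterate_succ_apply, ih]
    have := T.depth_parent v hv
    omega

theorem eq_root_of_depth_eq_zero {v : V} (h : T.depth v = 0) : v = T.root := by
  simpa [h] using T.iterate_parent_depth v

theorem iterate_parent_depth_sub {u v : V} {n : ℕ} (h : T.parent^[n] v = u) :
    T.parent^[T.depth v - T.depth u] v = u := by
  subst h
  rw [depth_iterate_parent]
  rcases le_total n (T.depth v) with hn | hn
  · congr 1
    omega
  · obtain ⟨m, rfl⟩ := Nat.exists_eq_add_of_le' hn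
    rw [Nat.sub_eq_zero_of_le hn, Nat.sub_zero, Function.iterate_add_apply,
      iterate_parent_depth, iterate_parent_root]

variable {T}

theorem IsStrictAncestor.iterate_parent {u v : V} (h : T.IsStrictAncestor u v) :
    T.parent^[T.depth v - T.depth u] v = u :=
  T.iterate_parent_depth_sub h.2.choose_spec

theorem IsStrictAncestor.depth_lt {u v : V} (h : T.IsStrictAncestor u v) :
    T.depth u < T.depth v := by
  obtain ⟨hne, n, rfl⟩ := h
  rw [depth_iterate_parent]
  have hv : T.depth v ≠ 0 := fun h0 => by
    rw [T.eq_root_of_depth_eq_zero h0, iterate_parent_root] at hne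
    exact hne rfl
  have hn : n ≠ 0 := by rintro rfl; exact hne rfl
  omega

theorem IsStrictAncestor.eq_of_depth_eq {u w v : V} (hu : T.IsStrictAncestor u v)
    (hw : T.IsStrictAncestor w v) (h : T.depth u = T.depth w) : u = w := by
  rw [← hu.iterate_parent, ← hw.iterate_parent, h]

theorem IsStrictAncestor.trans {u w v : V} (huw : T.IsStrictAncestor u w)
    (hwv : T.IsStrictAncestor w v) : T.IsStrictAncestor u v := by
  have hlt := huw.depth_lt.trans hwv.depth_lt
  obtain ⟨-, n, hn⟩ := huw
  obtain ⟨-, m, hm⟩ := hwv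
  exact ⟨fun h => (h ▸ hlt).false, n + m, by rw [Function.iterate_add_apply, hm, hn]⟩

theorem IsStrictAncestor.of_depth_lt {u w v : V} (hu : T.IsStrictAncestor u v)
    (hw : T.IsStrictAncestor w v) (h : T.depth u < T.depth w) : T.IsStrictAncestor u w := by
  have hwv := hw.depth_lt
  refine ⟨fun h' => (h' ▸ h).false, T.depth w - T.depth u, ?_⟩
  calc T.parent^[T.depth w - T.depth u] w
      = T.parent^[T.depth w - T.depth u] (T.parent^[T.depth v - T.depth w] v) := by
        rw [hw.iterate_parent]
    _ = T.parent^[T.depth v - T.depth u] v := by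
        rw [← Function.iterate_add_apply]
        congr 1
        omega
    _ = u := hu.iterate_parent

theorem isStrictAncestor_root {v : V} (hv : v ≠ T.root) : T.IsStrictAncestor T.root v :=
  ⟨hv.symm, _, T.iterate_parent_depth v⟩

end RTree

section AliceMove

variable {V : Type} {G : SimpleGraph V} {T : RTree V} {L : List V} {a b v : V}

theorem AliceMoveOK.available (h : AliceMoveOK G T L b a) : Available G L a := by
  rcases h with ⟨-, h, -⟩ | ⟨-, h, -⟩ <;> exact h

theorem AliceMoveOK.not_available_of_isStrictAncestor (h : AliceMoveOK G T L b a)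
    (hva : T.IsStrictAncestor v a) : ¬ Available G L v := by
  intro hv
  have := hva.depth_lt
  rcases h with ⟨hab, -, hmin⟩ | ⟨-, -, hmin⟩
  · exact absurd (hmin v (hva.trans hab) hv) (by omega)
  · exact absurd (hmin v hv) (by omega)

theorem AliceMoveOK.isStrictAncestor_of_available (h : AliceMoveOK G T L b a)
    (hvb : T.IsStrictAncestor v b) (hv : Available G L v) (hav : a ≠ v) :
    T.IsStrictAncestor a v := by
  rcases h with ⟨hab, -, hmin⟩ | ⟨hnone, -, -⟩
  · refine hab.of_depth_lt hvb ((hmin v hvb hv).lt_of_ne fun h => hav ?_)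
    exact hab.eq_of_depth_eq hvb h
  · exact absurd hv (hnone v hvb)

variable (T) in
theorem exists_aliceMoveOK (hL : ∃ u, Available G L u) : ∃ a, AliceMoveOK G T L b a := by
  by_cases hanc : ∃ u, T.IsStrictAncestor u b ∧ Available G L u
  · obtain ⟨a, ha⟩ := exists_minimalFor_of_wellFoundedLT _ T.depth hanc
    exact ⟨a, .inl ⟨ha.prop.1, ha.prop.2, fun u hub hu => ha.le ⟨hub, hu⟩⟩⟩
  · push Not at hanc
    obtain ⟨a, ha⟩ := exists_minimalFor_of_wellFoundedLT _ T.depth hL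
    exact ⟨a, .inr ⟨hanc, ha.prop, fun u hu => ha.le hu⟩⟩

theorem followsStrategy_append_singleton {x : V} :
    FollowsStrategy G T (L ++ [x]) ↔ FollowsStrategy G T L ∧ x ∉ L ∧ (L = [] → x = T.root) ∧
      ∀ h : L ≠ [], Even L.length → AliceMoveOK G T L (L.getLast h) x := by
  have hnodup : (L ++ [x]).Nodup ↔ x ∉ L ∧ L.Nodup := by
    rw [← List.concat_eq_append, List.nodup_concat]
  have hmove : ∀ i, 1 ≤ i → ∀ hi : 2 * i < L.length,
      AliceMoveOK G T ((L ++ [x]).take (2 * i)) ((L ++ [x])[2 * i - 1]'(by simp; omega))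
        ((L ++ [x])[2 * i]'(by simp; omega)) ↔
      AliceMoveOK G T (L.take (2 * i)) L[2 * i - 1] L[2 * i] := by
    intro i _ hi
    rw [List.take_append_of_le_length hi.le, List.getElem_append_left,
      List.getElem_append_left]
  have hlast : ∀ i (hne : L ≠ []) (hi : 2 * i = L.length),
      AliceMoveOK G T ((L ++ [x]).take (2 * i)) ((L ++ [x])[2 * i - 1]'(by simp; omega))
        ((L ++ [x])[2 * i]'(by simp; omega)) ↔ AliceMoveOK G T L (L.getLast hne) x := by
    intro i hne hi
    have h1 : 2 * i - 1 < L.length := by have := List.length_pos_iff.2 hne; omega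
    have e1 : (L ++ [x]).take (2 * i) = L := by rw [hi, List.take_left]
    have e2 : (L ++ [x])[2 * i - 1]'(by simp; omega) = L.getLast hne := by
      rw [List.getElem_append_left h1, List.getLast_eq_getElem]
      simp only [hi]
    have e3 : (L ++ [x])[2 * i]'(by simp; omega) = x := by
      simp [hi]
    rw [e1, e2, e3]
  unfold FollowsStrategy
  simp only [List.get_eq_getElem, List.length_append, List.length_singleton, hnodup]
  constructor
  · rintro ⟨⟨hx, hnd⟩, hroot, hmv⟩
    refine ⟨⟨hnd, fun h => ?_, fun i hi h => (hmove i hi h).1 (hmv i hi (by omega))⟩, hx,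
      ?_, fun hne ⟨j, hj⟩ => ?_⟩
    · simpa [List.getElem_append_left h] using hroot (by omega)
    · rintro rfl
      simpa using hroot
    · have := List.length_pos_iff.2 hne
      exact (hlast j hne (by omega)).1 (hmv j (by omega) (by omega))
  · rintro ⟨⟨hnd, hroot, hmv⟩, hx, hxroot, hAlice⟩
    refine ⟨⟨hx, hnd⟩, fun h => ?_, fun i hi h => ?_⟩
    · by_cases hL : L = []
      · subst hL
        simpa using hxroot rfl
      · have h0 := List.length_pos_iff.2 hL
        rw [List.getElem_append_left h0]
        exact hroot h0
    · rcases (by omega : 2 * i < L.length ∨ 2 * i = L.length) with hlt | heq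
      · exact (hmove i hi hlt).2 (hmv i hi hlt)
      · have hne : L ≠ [] := by rintro rfl; simp at heq; omega
        exact (hlast i hne heq).2 (hAlice hne ⟨i, by omega⟩)

end AliceMove

section Play

variable {V : Type} {G : SimpleGraph V} {T : RTree V} {L : List V} {v : V}

theorem FollowsStrategy.of_prefix {M : List V} (hL : FollowsStrategy G T L) (h : M <+: L) :
    FollowsStrategy G T M := by
  obtain ⟨r, rfl⟩ := h
  induction r using List.reverseRecOn with
  | nil => simpa using hL
  | append_singleton r x ih =>
    rw [← List.append_assoc] at hL
    exact ih (followsStrategy_append_singleton.1 hL).1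

theorem FollowsStrategy.root_mem (hL : FollowsStrategy G T L) (hne : L ≠ []) : T.root ∈ L := by
  have h0 := List.length_pos_iff.2 hne
  rw [← hL.2.1 h0]
  exact List.get_mem ..

theorem one_le_markedAncestors (hroot : T.root ∈ L) (hv : v ≠ T.root) :
    1 ≤ markedAncestors T L v :=
  List.countP_pos_iff.2 ⟨T.root, hroot, by simpa using RTree.isStrictAncestor_root hv⟩

open Classical in
theorem markedAncestors_append_singleton (x : V) :
    markedAncestors T (L ++ [x]) v =
      markedAncestors T L v + if T.IsStrictAncestor x v then 1 else 0 := by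
  simp [markedAncestors, List.countP_append]

/- A Bob move onto a descendant of an available `v` is answered by Alice with a strict ancestor
of `v`; Alice herself marks a neighbour below `v` only while `v` has no marked neighbour. The
last summand pays for a Bob move below `v` that Alice has not answered yet. -/
open Classical in
theorem FollowsStrategy.countP_adj_add_one_le [DecidableRel G.Adj] (hG : G ≤ T.closure)
    (hL : FollowsStrategy G T L) (hne : L ≠ []) (hv : v ∉ L) :
    L.countP (fun u => decide (G.Adj v u)) + 1 ≤ 2 * markedAncestors T L v +
      if Even L.length ∧ T.IsStrictAncestor v (L.getLast hne) then 1 else 0 := by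
  induction L using List.reverseRecOn with
  | nil => exact absurd rfl hne
  | append_singleton L x ih =>
    obtain ⟨hL', -, hxroot, hAlice⟩ := followsStrategy_append_singleton.1 hL
    have hvL : v ∉ L := fun h => hv (List.mem_append_left _ h)
    have hxv : x ≠ v := by rintro rfl; simp at hv
    have hcomp : G.Adj v x → T.IsStrictAncestor v x ∨ T.IsStrictAncestor x v := fun h => hG h
    rw [markedAncestors_append_singleton]
    simp only [List.countP_append, List.countP_singleton, decide_eq_true_eq,
      List.getLast_append_singleton, List.length_append, List.length_singleton,
      Nat.even_add_one]
    rcases eq_or_ne L [] with rfl | hL0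
    · have hvroot : v ≠ T.root := by rintro rfl; simp [hxroot rfl] at hv
      simp only [hxroot rfl, RTree.isStrictAncestor_root hvroot, markedAncestors,
        List.countP_nil, List.length_nil, Even.zero]
      split_ifs <;> omega
    have hroot := hL'.root_mem hL0
    have hM := one_le_markedAncestors (v := v) hroot (by rintro rfl; exact hvL hroot)
    specialize ih hL' hL0 hvL
    rcases Nat.even_or_odd L.length with heven | hodd
    · have hx := hAlice hL0 heven
      simp only [heven, true_and, not_true, false_and, if_false, add_zero] at ih ⊢
      by_cases hxa : T.IsStrictAncestor x v
      · simp only [hxa, if_true]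
        split_ifs at ih ⊢ <;> omega
      by_cases hN : L.countP (fun u => decide (G.Adj v u)) = 0
      · split_ifs at ih ⊢ <;> omega
      have hav : Available G L v := by
        obtain ⟨w, hw, hvw⟩ := List.countP_pos_iff.1 (Nat.pos_of_ne_zero hN)
        exact ⟨hvL, w, hw, (of_decide_eq_true hvw).symm⟩
      have hnadj : ¬ G.Adj v x := fun h =>
        (hcomp h).elim (fun h => hx.not_available_of_isStrictAncestor h hav) hxa
      have hnb : ¬ T.IsStrictAncestor v (L.getLast hL0) := fun hb =>
        hxa (hx.isStrictAncestor_of_available hb hav hxv)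
      simp only [hnadj, hxa, hnb, if_false] at ih ⊢
      omega
    · have hnodd : ¬ Even L.length := Nat.not_even_iff_odd.2 hodd
      simp only [hnodd, false_and, if_false, add_zero, not_false_eq_true, true_and] at ih ⊢
      by_cases hvx : G.Adj v x
      · rcases hcomp hvx with h | h <;> simp only [hvx, h, if_true] <;> split_ifs <;> omega
      · simp only [hvx, if_false]
        split_ifs <;> omega

theorem FollowsStrategy.cons_of_not_even {S : List V} {b : V}
    (hS : FollowsStrategy G T S.reverse) (hodd : ¬ Even S.length) (hb : b ∉ S) :
    FollowsStrategy G T (b :: S).reverse := by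
  rw [List.reverse_cons]
  refine followsStrategy_append_singleton.2 ⟨hS, by simpa using hb, fun h => ?_, fun _ h => ?_⟩
  · simp only [List.reverse_eq_nil_iff] at h
    simp [h] at hodd
  · simp [hodd] at h

end Play

section Bound

variable {V : Type} {G : SimpleGraph V} {T : RTree V} {L : List V} {v : V} {k : ℕ}

theorem markedAncestors_le_depth (hL : L.Nodup) : markedAncestors T L v ≤ T.depth v := by
  classical
  rw [markedAncestors, List.countP_eq_length_filter,
    ← List.toFinset_card_of_nodup (hL.filter _), ← Finset.card_range (T.depth v)]
  apply Finset.card_le_card_of_injOn T.depth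
  · intro u hu
    simp only [Finset.mem_coe, List.mem_toFinset, List.mem_filter, decide_eq_true_eq] at hu
    simpa using hu.2.depth_lt
  · intro u hu w hw h
    simp only [Finset.mem_coe, List.mem_toFinset, List.mem_filter, decide_eq_true_eq] at hu hw
    exact hu.2.eq_of_depth_eq hw.2 h

theorem FollowsStrategy.countP_adj_le [DecidableRel G.Adj] (hk : 3 ≤ k)
    (hheight : T.HeightLE k) (hG : G ≤ T.closure) (hL : FollowsStrategy G T L) (hv : v ∉ L) :
    L.countP (fun u => decide (G.Adj v u)) ≤ 2 * k - 4 := by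
  rcases eq_or_ne L [] with rfl | hne
  · simp
  have hM := markedAncestors_le_depth (T := T) (v := v) hL.1
  by_cases hdesc : ∃ u, T.IsStrictAncestor v u
  · obtain ⟨u, hu⟩ := hdesc
    have := hu.depth_lt
    have := hheight u
    have := hL.countP_adj_add_one_le hG hne hv
    split_ifs at this <;> omega
  · push Not at hdesc
    have hanc : L.countP (fun u => decide (G.Adj v u)) ≤ markedAncestors T L v := by
      refine List.countP_mono_left fun u _ h => ?_
      simpa using ((hG (of_decide_eq_true h)).resolve_left (hdesc u))
    have := hheight v
    omega

end Bound

section Game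

variable {V : Type} [Fintype V] [DecidableEq V] {G : SimpleGraph V} {T : RTree V}

theorem markScore_le [DecidableRel G.Adj] {k : ℕ} (hk : 3 ≤ k) (hheight : T.HeightLE k)
    (hG : G ≤ T.closure) {L : List V} (hL : FollowsStrategy G T L) :
    markScore G L ≤ 2 * k - 3 := by
  refine Finset.sup_le fun v _ => ?_
  have := (hL.of_prefix (List.takeWhile_prefix _)).countP_adj_le hk hheight hG
    (v := v) (fun h => by simpa using List.mem_takeWhile_imp (p := fun u => decide (u ≠ v)) h)
  unfold backDegree
  omega

theorem SimpleGraph.Connected.exists_available (hconn : G.Connected) {L : List V} (hne : L ≠ [])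
    (hL : L.length < Fintype.card V) : ∃ u, Available G L u := by
  obtain ⟨u, hu⟩ : ∃ u, u ∉ L := by
    by_contra! h
    have := Finset.card_le_card fun x (_ : x ∈ Finset.univ) => List.mem_toFinset.2 (h x)
    have := L.toFinset_card_le
    simp only [Finset.card_univ] at *
    omega
  obtain ⟨w, hw⟩ := List.exists_mem_of_ne_nil L hne
  obtain ⟨d, -, hd1, hd2⟩ := (hconn.preconnected w u).some.exists_boundary_dart {x | x ∈ L} hw hu
  exact ⟨d.snd, hd2, d.fst, hd1, d.adj⟩

theorem FollowsStrategy.exists_connLegalMove (hconn : G.Connected) {S : List V}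
    (hS : FollowsStrategy G T S.reverse) (hlen : S.length < Fintype.card V) :
    ∃ a, ConnLegalMove G S a ∧ FollowsStrategy G T (a :: S).reverse := by
  rcases eq_or_ne S [] with rfl | hne
  · exact ⟨T.root, ⟨List.not_mem_nil, .inl rfl⟩, followsStrategy_append_singleton.2
      ⟨hS, List.not_mem_nil, fun _ => rfl, fun h => absurd rfl h⟩⟩
  have hne' : S.reverse ≠ [] := by simpa using hne
  obtain ⟨a, ha⟩ := exists_aliceMoveOK T (b := S.reverse.getLast hne')
    (hconn.exists_available hne' (by simpa using hlen))
  obtain ⟨haS, w, hw, hwa⟩ := ha.available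
  refine ⟨a, ⟨fun h => haS (List.mem_reverse.2 h), .inr ⟨w, List.mem_reverse.1 hw, hwa⟩⟩, ?_⟩
  rw [List.reverse_cons]
  exact followsStrategy_append_singleton.2 ⟨hS, haS, fun h => absurd h hne', fun _ _ => ha⟩

theorem aliceWinsFrom_of_followsStrategy [DecidableRel G.Adj] (hconn : G.Connected) {m : ℕ}
    (hscore : ∀ L, FollowsStrategy G T L → markScore G L ≤ m) (S : List V)
    (hS : FollowsStrategy G T S.reverse) : AliceWinsFrom G m S := by
  rw [AliceWinsFrom]
  split_ifs with hlen heven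
  · obtain ⟨a, ha, haS⟩ := hS.exists_connLegalMove hconn hlen
    exact ⟨a, ha, aliceWinsFrom_of_followsStrategy hconn hscore (a :: S) haS⟩
  · exact fun b hb =>
      aliceWinsFrom_of_followsStrategy hconn hscore (b :: S) (hS.cons_of_not_even heven hb.1)
  · exact hscore _ hS
termination_by Fintype.card V - S.length
decreasing_by all_goals simp only [List.length_cons]; omega

end Game

open Classical in
/-- Let `k ≥ 3` and let `G` be a connected graph of treedepth `k`,
witnessed by a rooted tree `T` of height `k` whose closure contains `G`.  Under Alice's
ancestor-marking strategy, every unmarked vertex has at most `2k - 4` marked neighbours at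
every point of the game; consequently the connected game coloring number of `G` is at most
`2k - 3`. -/
theorem connGameColNumber_le_of_treedepth
    {V : Type} [Fintype V] [DecidableEq V]
    (G : SimpleGraph V) [DecidableRel G.Adj] (T : RTree V) (k : ℕ) (hk : 3 ≤ k)
    (hheight : T.HeightLE k) (hconn : G.Connected) (hG : G ≤ T.closure) :
    (∀ L : List V, FollowsStrategy G T L →
      ∀ v : V, v ∉ L → (L.countP fun u => decide (G.Adj v u)) ≤ 2 * k - 4) ∧
    connGameColNumber G ≤ 2 * k - 3 := by
  refine ⟨fun L hL v hv => hL.countP_adj_le hk hheight hG hv, Nat.sInf_le ?_⟩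
  exact aliceWinsFrom_of_followsStrategy hconn (fun L hL => markScore_le hk hheight hG hL) []
    ⟨List.nodup_nil, by simp, by simp⟩
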